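/- arXiv:2503.03525 — 2 statements merged into one kernel-verified Lean document; each statement's English description precedes it below -/
import Mathlib

section
/- Let u ∈ ℝ^N satisfy ‖u‖_∞ ≤ π/2 and let Δt ≥ 0. Then the matrix I + Δt(C + G(u)D⁻²) is invertible and ‖(I + Δt(C + G(u)D⁻²))^{-1}‖_∞ ≤ 1, where ‖·‖_∞ is the operator norm induced by the maximum norm on ℝ^N. -/
open Real Matrix

noncomputable section

/-- Mesh size `h = 1/(N+1)`. -/
def hmesh (N : ℕ) : ℝ := 1 / (N + 1)

/-- Grid points `x_i = i·h`, `i = 1,…,N` (here `i : Fin N` corresponds to `i+1`). -/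
def gridx (N : ℕ) (i : Fin N) : ℝ := ((i : ℕ) + 1) * hmesh N

/-- `A = (1/h²)·tridiag(−1,2,−1)`. -/
def matA (N : ℕ) : Matrix (Fin N) (Fin N) ℝ := fun i j =>
  (1 / (hmesh N) ^ 2) *
    (if (i : ℕ) = (j : ℕ) then 2
     else if (i : ℕ) + 1 = (j : ℕ) ∨ (j : ℕ) + 1 = (i : ℕ) then -1 else 0)

/-- `B = (1/(2h))·tridiag(−1,0,1)`. -/
def matB (N : ℕ) : Matrix (Fin N) (Fin N) ℝ := fun i j =>
  (1 / (2 * hmesh N)) *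
    (if (i : ℕ) + 1 = (j : ℕ) then 1
     else if (j : ℕ) + 1 = (i : ℕ) then -1 else 0)

/-- `D = diag(x_1,…,x_N)`. -/
def matD (N : ℕ) : Matrix (Fin N) (Fin N) ℝ := Matrix.diagonal (gridx N)

/-- `D^β = diag(x_1^β,…,x_N^β)` (real powers). -/
def matDpow (N : ℕ) (β : ℝ) : Matrix (Fin N) (Fin N) ℝ :=
  Matrix.diagonal (fun i => gridx N i ^ β)

/-- `C = A − D⁻¹B`. -/
def matC (N : ℕ) : Matrix (Fin N) (Fin N) ℝ :=
  matA N - Matrix.diagonal (fun i => (gridx N i)⁻¹) * matB N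

/-- `g(y) = sin(2y)/(2y)` for `y ≠ 0`, `g(0) = 1`. -/
def gfun (y : ℝ) : ℝ := if y = 0 then 1 else Real.sin (2 * y) / (2 * y)

/-- `G(u) = diag(g(u_1),…,g(u_N))`. -/
def matG {N : ℕ} (u : Fin N → ℝ) : Matrix (Fin N) (Fin N) ℝ :=
  Matrix.diagonal (fun i => gfun (u i))

/-- The matrix `I + Δt(C + G(v)D⁻²)` of the semi-implicit Euler scheme. -/
def stepMat (N : ℕ) (Δt : ℝ) (v : Fin N → ℝ) : Matrix (Fin N) (Fin N) ℝ :=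
  1 + Δt • (matC N + matG v * matDpow N (-2))

/-- Operator norm of a matrix induced by the maximum norm on `ℝ^N`
(the Pi norm on `Fin N → ℝ` is the sup norm). -/
def opNormInf {N : ℕ} (M : Matrix (Fin N) (Fin N) ℝ) : ℝ :=
  ‖(LinearMap.toContinuousLinearMap (Matrix.mulVecLin M) :
      (Fin N → ℝ) →L[ℝ] (Fin N → ℝ))‖

end

open Real Matrix Finset

private lemma varah_bound {N : ℕ} (hN : 0 < N) (M : Matrix (Fin N) (Fin N) ℝ)
    (hdom : ∀ i, (∑ j ∈ Finset.univ.erase i, |M i j|) + 1 ≤ M i i) :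
    IsUnit M ∧ ∀ w, ‖M⁻¹.mulVec w‖ ≤ ‖w‖ := by
  have key : ∀ v : Fin N → ℝ, ‖v‖ ≤ ‖M.mulVec v‖ := by
    intro v
    have : Nonempty (Fin N) := ⟨⟨0, hN⟩⟩
    obtain ⟨i, hi⟩ := Finite.exists_max (fun i => |v i|)
    have hSnn : 0 ≤ ∑ j ∈ Finset.univ.erase i, |M i j| :=
      Finset.sum_nonneg fun j _ => abs_nonneg _
    have hsum : |∑ j ∈ Finset.univ.erase i, M i j * v j|
        ≤ (∑ j ∈ Finset.univ.erase i, |M i j|) * |v i| := by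
      calc |∑ j ∈ Finset.univ.erase i, M i j * v j|
          ≤ ∑ j ∈ Finset.univ.erase i, |M i j * v j| := Finset.abs_sum_le_sum_abs _ _
        _ ≤ ∑ j ∈ Finset.univ.erase i, |M i j| * |v i| := by
            refine Finset.sum_le_sum fun j _ => ?_
            rw [abs_mul]
            exact mul_le_mul_of_nonneg_left (hi j) (abs_nonneg _)
        _ = _ := by rw [← Finset.sum_mul]
    have hMvi : |v i| ≤ |M.mulVec v i| := by
      have hexp : M.mulVec v i = M i i * v i + ∑ j ∈ Finset.univ.erase i, M i j * v j := by
        rw [Matrix.mulVec, dotProduct]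
        exact (Finset.add_sum_erase _ _ (Finset.mem_univ i)).symm
      have h1 : |M i i * v i| = M i i * |v i| := by
        rw [abs_mul, abs_of_nonneg (le_trans (by linarith) (hdom i))]
      have := abs_sub_abs_le_abs_sub (M i i * v i) (-(∑ j ∈ Finset.univ.erase i, M i j * v j))
      rw [sub_neg_eq_add, ← hexp, abs_neg] at this
      have h2 : (∑ j ∈ Finset.univ.erase i, |M i j|) * |v i| + 1 * |v i| ≤ M i i * |v i| :=
        by rw [← add_mul]; exact mul_le_mul_of_nonneg_right (hdom i) (abs_nonneg _)
      nlinarith [abs_nonneg (v i)]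
    calc ‖v‖ ≤ |v i| := by
          rw [show |v i| = ‖v i‖ from rfl] at *
          exact pi_norm_le_iff_of_nonneg (norm_nonneg _) |>.mpr hi
      _ ≤ |M.mulVec v i| := hMvi
      _ ≤ ‖M.mulVec v‖ := by simpa using norm_le_pi_norm (M.mulVec v) i
  have hinj : Function.Injective M.mulVec := by
    intro a b hab
    have h0 : M.mulVec (a - b) = 0 := by
      rw [Matrix.mulVec_sub, hab, sub_self]
    have := key (a - b)
    rw [h0, norm_zero] at this
    have := le_antisymm this (norm_nonneg _)
    rwa [norm_eq_zero, sub_eq_zero] at this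
  have hunit : IsUnit M := Matrix.mulVec_injective_iff_isUnit.mp hinj
  refine ⟨hunit, fun w => ?_⟩
  have hMM : M * M⁻¹ = 1 := Matrix.mul_nonsing_inv M ((Matrix.isUnit_iff_isUnit_det M).mp hunit)
  have hid : M.mulVec (M⁻¹.mulVec w) = w := by
    rw [Matrix.mulVec_mulVec, hMM, Matrix.one_mulVec]
  calc ‖M⁻¹.mulVec w‖ ≤ ‖M.mulVec (M⁻¹.mulVec w)‖ := key _
    _ = ‖w‖ := by rw [hid]

private lemma sum_ite_le' {N : ℕ} (s : Finset (Fin N)) (p : Fin N → Prop) [DecidablePred p]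
    (hp : ∀ x y, p x → p y → x = y) (a : ℝ) (ha : 0 ≤ a) :
    (∑ j ∈ s, if p j then a else 0) ≤ a := by
  rw [← Finset.sum_filter]
  have hcard : (s.filter p).card ≤ 1 :=
    Finset.card_le_one.mpr fun x hx y hy =>
      hp x y (Finset.mem_filter.mp hx).2 (Finset.mem_filter.mp hy).2
  rw [Finset.sum_const, nsmul_eq_mul]
  calc ((s.filter p).card : ℝ) * a ≤ 1 * a := by
        apply mul_le_mul_of_nonneg_right _ ha
        exact_mod_cast hcard
    _ = a := one_mul a

private lemma gfun_nonneg' {y : ℝ} (hy : |y| ≤ π / 2) : 0 ≤ gfun y := by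
  unfold gfun
  split_ifs with h
  · norm_num
  rw [abs_le] at hy
  rcases lt_or_gt_of_ne h with hneg | hpos
  · apply div_nonneg_of_nonpos _ (by linarith)
    have : Real.sin (-(2*y)) ≥ 0 :=
      Real.sin_nonneg_of_nonneg_of_le_pi (by linarith) (by linarith)
    rw [Real.sin_neg] at this; linarith
  · exact div_nonneg (Real.sin_nonneg_of_nonneg_of_le_pi (by linarith) (by linarith)) (by linarith)

private lemma dominance' {N : ℕ} (u : Fin N → ℝ) (hu : ‖u‖ ≤ π / 2)
    (Δt : ℝ) (hΔt : 0 ≤ Δt) (i : Fin N) :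
    (∑ j ∈ Finset.univ.erase i, |(1 + Δt • (matC N + matG u * matDpow N (-2))) i j|) + 1
      ≤ (1 + Δt • (matC N + matG u * matDpow N (-2))) i i := by
  set M := 1 + Δt • (matC N + matG u * matDpow N (-2)) with hM
  set h := hmesh N with hh
  have hpos : 0 < h := by
    rw [hh]; unfold hmesh; positivity
  have hxpos : 0 < gridx N i := by
    unfold gridx; rw [← hh]; positivity
  have hxge : h ≤ gridx N i := by
    unfold gridx; rw [← hh]
    nlinarith [(Nat.cast_nonneg (i : ℕ) : (0:ℝ) ≤ ((i : ℕ) : ℝ))]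
  have hxinv : (gridx N i)⁻¹ ≤ h⁻¹ := inv_anti₀ hpos hxge
  have hui : |u i| ≤ π / 2 := le_trans (by simpa using norm_le_pi_norm u i) hu
  have hgnn : 0 ≤ gfun (u i) := gfun_nonneg' hui
  have hdnn : 0 ≤ gridx N i ^ (-2 : ℝ) := Real.rpow_nonneg hxpos.le _
  have hdiag : M i i = 1 + Δt * (2 / h ^ 2 + gfun (u i) * gridx N i ^ (-2 : ℝ)) := by
    rw [hM]
    have hB : matB N i i = 0 := by
      unfold matB
      have : ¬((i:ℕ) + 1 = (i:ℕ)) := by omega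
      simp [this]
    simp only [Matrix.add_apply, Matrix.one_apply_eq, Matrix.smul_apply, smul_eq_mul,
      matC, matG, matDpow, Matrix.sub_apply, Matrix.diagonal_mul_diagonal,
      Matrix.diagonal_apply_eq, Matrix.diagonal_mul, hB, matA]
    rw [← hh]
    have : (h ^ 2)⁻¹ * 2 = 2 / h ^ 2 := by ring
    simp [this]
  set a := 1 / h ^ 2 + (gridx N i)⁻¹ * (1 / (2 * h)) with ha
  set b := 1 / h ^ 2 - (gridx N i)⁻¹ * (1 / (2 * h)) with hb
  have hann : 0 ≤ a := by rw [ha]; positivity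
  have hbnn : 0 ≤ b := by
    rw [hb]
    have h1 : (gridx N i)⁻¹ * (1 / (2 * h)) ≤ h⁻¹ * (1 / (2 * h)) :=
      mul_le_mul_of_nonneg_right hxinv (by positivity)
    have h2 : h⁻¹ * (1 / (2 * h)) = 1 / (2 * h ^ 2) := by field_simp
    have h3 : 1 / (2 * h^2) ≤ 1 / h ^ 2 := by
      apply div_le_div_of_nonneg_left (by norm_num) (by positivity) (by nlinarith)
    linarith
  have hoff : ∀ j ∈ Finset.univ.erase i,
      |M i j| ≤ Δt * ((if (i:ℕ) + 1 = (j:ℕ) then a else 0)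
        + (if (j:ℕ) + 1 = (i:ℕ) then b else 0)) := by
    intro j hj
    have hne : j ≠ i := Finset.ne_of_mem_erase hj
    have hne' : ¬((i:ℕ) = (j:ℕ)) := fun hc => hne (Fin.ext hc.symm)
    have hneq : i ≠ j := fun hc => hne hc.symm
    have hMij : M i j = Δt * ((1 / h ^ 2) *
        (if (i:ℕ) + 1 = (j:ℕ) ∨ (j:ℕ) + 1 = (i:ℕ) then -1 else 0)
      - (gridx N i)⁻¹ * ((1 / (2 * h)) *
        (if (i:ℕ) + 1 = (j:ℕ) then 1 else if (j:ℕ) + 1 = (i:ℕ) then -1 else 0))) := by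
      rw [hM]
      simp only [Matrix.add_apply, Matrix.smul_apply, smul_eq_mul,
        Matrix.one_apply_ne hneq, matC, matG, matDpow, Matrix.sub_apply,
        Matrix.diagonal_mul_diagonal, Matrix.diagonal_apply_ne _ hneq, matA, matB,
        Matrix.diagonal_mul]
      rw [← hh]
      simp [hne']
    rw [hMij]
    by_cases h1 : (i:ℕ) + 1 = (j:ℕ)
    · have h2 : ¬((j:ℕ) + 1 = (i:ℕ)) := by omega
      simp only [h1, h2, if_true, if_false, or_false, true_or, add_zero]
      rw [abs_mul, abs_of_nonneg hΔt]
      apply mul_le_mul_of_nonneg_left _ hΔt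
      have hexpr : 1 / h ^ 2 * (-1 : ℝ) - (gridx N i)⁻¹ * (1 / (2 * h) * 1) = -a := by
        rw [ha]; ring
      rw [hexpr, abs_neg, abs_of_nonneg hann]
    · by_cases h2 : (j:ℕ) + 1 = (i:ℕ)
      · simp only [h1, h2, if_true, if_false, or_true, false_or, zero_add]
        rw [abs_mul, abs_of_nonneg hΔt]
        apply mul_le_mul_of_nonneg_left _ hΔt
        have hexpr : 1 / h ^ 2 * (-1 : ℝ) - (gridx N i)⁻¹ * (1 / (2 * h) * (-1)) = -b := by
          rw [hb]; ring
        rw [hexpr, abs_neg, abs_of_nonneg hbnn]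
      · have h3 : ¬((i:ℕ) + 1 = (j:ℕ) ∨ (j:ℕ) + 1 = (i:ℕ)) := by omega
        simp [h1, h2, h3, mul_nonneg hΔt (add_nonneg hann hbnn)]
  have hsum : (∑ j ∈ Finset.univ.erase i, |M i j|) ≤ Δt * (2 / h ^ 2) := by
    calc (∑ j ∈ Finset.univ.erase i, |M i j|)
        ≤ ∑ j ∈ Finset.univ.erase i, Δt * ((if (i:ℕ) + 1 = (j:ℕ) then a else 0)
            + (if (j:ℕ) + 1 = (i:ℕ) then b else 0)) := Finset.sum_le_sum hoff
      _ = Δt * ((∑ j ∈ Finset.univ.erase i, (if (i:ℕ) + 1 = (j:ℕ) then a else 0))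
            + ∑ j ∈ Finset.univ.erase i, (if (j:ℕ) + 1 = (i:ℕ) then b else 0)) := by
          rw [← Finset.mul_sum, Finset.sum_add_distrib]
      _ ≤ Δt * (a + b) := by
          apply mul_le_mul_of_nonneg_left _ hΔt
          gcongr
          · exact sum_ite_le' _ _ (fun x y hx hy => Fin.ext (by omega)) a hann
          · exact sum_ite_le' _ _ (fun x y hx hy => Fin.ext (by omega)) b hbnn
      _ = Δt * (2 / h ^ 2) := by rw [ha, hb]; ring
  rw [hdiag]
  nlinarith [mul_nonneg hgnn hdnn]

/-- For `‖u‖_∞ ≤ π/2` and `Δt ≥ 0`, the matrix `I + Δt(C + G(u)D⁻²)` is invertible and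
its inverse has `‖·‖_∞`-operator norm at most 1. -/
theorem stmt1 {N : ℕ} (hN : 1 ≤ N) (u : Fin N → ℝ) (hu : ‖u‖ ≤ π / 2)
    (Δt : ℝ) (hΔt : 0 ≤ Δt) :
    IsUnit (1 + Δt • (matC N + matG u * matDpow N (-2))) ∧
      opNormInf (1 + Δt • (matC N + matG u * matDpow N (-2)))⁻¹ ≤ 1 := by
  obtain ⟨hunit, hbound⟩ := varah_bound hN (1 + Δt • (matC N + matG u * matDpow N (-2)))
    (dominance' u hu Δt hΔt)
  refine ⟨hunit, ?_⟩
  unfold opNormInf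
  apply ContinuousLinearMap.opNorm_le_bound _ zero_le_one
  intro x
  rw [one_mul]
  simpa using hbound x
end

section
/- Let u⁰ ∈ ℝ^N satisfy ‖u⁰‖_∞ ≤ π/2 and let Δt > 0. Then the semi-implicit Euler scheme is well-defined, i.e. for every n ≥ 0 the matrix I + Δt(C + G(uⁿ)D⁻²) is invertible so that u^{n+1} is uniquely determined, and ‖uⁿ‖_∞ ≤ ‖u⁰‖_∞ holds for all n ≥ 0. -/
open Real Matrix

section AuxLemmas
open Finset


lemma gfun_nonneg'_s2 {y : ℝ} (hy : |y| ≤ π / 2) : 0 ≤ (if y = 0 then 1 else Real.sin (2 * y) / (2 * y)) := by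
  split
  · norm_num
  · rename_i h
    rcases lt_or_gt_of_ne h with hneg | hpos
    · have h1 : Real.sin (2 * y) ≤ 0 := by
        apply Real.sin_nonpos_of_nonpos_of_neg_pi_le
        · linarith
        · rw [abs_le] at hy; linarith
      exact div_nonneg_iff.mpr (Or.inr ⟨h1, by linarith⟩)
    · have h1 : 0 ≤ Real.sin (2 * y) := by
        apply Real.sin_nonneg_of_nonneg_of_le_pi (by linarith)
        rw [abs_le] at hy; linarith
      exact div_nonneg h1 (by linarith)

lemma sdd_norm_le' {N : ℕ} (hN : 1 ≤ N) (M : Matrix (Fin N) (Fin N) ℝ)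
    (hM : ∀ i, (∑ j ∈ Finset.univ.erase i, |M i j|) + 1 ≤ M i i)
    (v : Fin N → ℝ) : ‖v‖ ≤ ‖M.mulVec v‖ := by
  have : Nonempty (Fin N) := Fin.pos_iff_nonempty.mp hN
  obtain ⟨i, -, hi⟩ := Finset.exists_max_image Finset.univ (fun j => |v j|)
    ⟨Classical.arbitrary (Fin N), Finset.mem_univ _⟩
  have hvle : ∀ j, |v j| ≤ |v i| := fun j => hi j (Finset.mem_univ j)
  have hnorm : ‖v‖ ≤ |v i| := by
    rw [pi_norm_le_iff_of_nonneg (abs_nonneg _)]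
    intro j; rw [Real.norm_eq_abs]; exact hvle j
  refine hnorm.trans ?_
  have hS : 0 ≤ ∑ j ∈ Finset.univ.erase i, |M i j| :=
    Finset.sum_nonneg fun j _ => abs_nonneg _
  set S := ∑ j ∈ Finset.univ.erase i, |M i j| with hSdef
  have key : |v i| ≤ |M.mulVec v i| := by
    have hsplit : M.mulVec v i = M i i * v i + ∑ j ∈ Finset.univ.erase i, M i j * v j := by
      rw [Matrix.mulVec, dotProduct]
      exact (Finset.add_sum_erase _ _ (Finset.mem_univ i)).symm
    have hrest : |∑ j ∈ Finset.univ.erase i, M i j * v j| ≤ S * |v i| := by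
      refine (Finset.abs_sum_le_sum_abs _ _).trans ?_
      rw [Finset.sum_mul]
      refine Finset.sum_le_sum fun j _ => ?_
      rw [abs_mul]
      exact mul_le_mul_of_nonneg_left (hvle j) (abs_nonneg _)
    have h1 : |M i i * v i| - |∑ j ∈ Finset.univ.erase i, M i j * v j| ≤ |M.mulVec v i| := by
      rw [hsplit]
      have h3 := abs_add_le (M i i * v i + ∑ j ∈ Finset.univ.erase i, M i j * v j)
        (-(∑ j ∈ Finset.univ.erase i, M i j * v j))
      simp only [add_neg_cancel_right, abs_neg] at h3
      linarith
    have h2 : |M i i * v i| = M i i * |v i| := by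
      rw [abs_mul, abs_of_nonneg (by linarith [hM i])]
    nlinarith [hM i, abs_nonneg (v i)]
  have h4 := norm_le_pi_norm (M.mulVec v) i
  rw [Real.norm_eq_abs] at h4
  exact key.trans h4

lemma sdd_isUnit' {N : ℕ} (hN : 1 ≤ N) (M : Matrix (Fin N) (Fin N) ℝ)
    (hM : ∀ i, (∑ j ∈ Finset.univ.erase i, |M i j|) + 1 ≤ M i i) : IsUnit M := by
  rw [Matrix.isUnit_iff_isUnit_det, isUnit_iff_ne_zero]
  intro hdet
  obtain ⟨v, hv0, hv⟩ := Matrix.exists_mulVec_eq_zero_iff.mpr hdet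
  have h5 := sdd_norm_le' hN M hM v
  rw [hv, norm_zero] at h5
  exact hv0 (norm_le_zero_iff.mp h5)

lemma hmesh_pos (N : ℕ) : 0 < hmesh N := by
  unfold hmesh; positivity

lemma gridx_pos {N : ℕ} (i : Fin N) : 0 < gridx N i := by
  have := hmesh_pos N
  unfold gridx; positivity

lemma stepMat_apply {N : ℕ} (Δt : ℝ) (v : Fin N → ℝ) (i j : Fin N) :
    stepMat N Δt v i j = (if i = j then 1 else 0) +
      Δt * ((matA N i j - (gridx N i)⁻¹ * matB N i j) +
        (if i = j then gfun (v i) * gridx N i ^ (-2 : ℝ) else 0)) := by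
  simp [stepMat, matC, matG, matDpow, Matrix.add_apply, Matrix.sub_apply,
    Matrix.one_apply, Matrix.diagonal_mul_diagonal, Matrix.diagonal_apply,
    Matrix.diagonal_mul, smul_eq_mul]
  split <;> ring

lemma stepMat_offdiag {N : ℕ} (Δt : ℝ) (v : Fin N → ℝ) {i j : Fin N} (hij : i ≠ j) :
    stepMat N Δt v i j = Δt * (matA N i j - (gridx N i)⁻¹ * matB N i j) := by
  rw [stepMat_apply]
  simp [hij]

-- diagonal value
lemma stepMat_diag {N : ℕ} (Δt : ℝ) (v : Fin N → ℝ) (i : Fin N) :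
    stepMat N Δt v i i = 1 + Δt * (2 / (hmesh N) ^ 2 + gfun (v i) * gridx N i ^ (-2 : ℝ)) := by
  rw [stepMat_apply]
  have hB : matB N i i = 0 := by
    unfold matB; simp
  have hA : matA N i i = (1 / (hmesh N) ^ 2) * 2 := by
    unfold matA; simp
  rw [hA, hB]
  simp only [if_pos rfl, mul_zero, sub_zero]
  ring_nf
  norm_num
  ring

/-- Off-diagonal entries explicitly: three cases. -/
lemma stepMat_offdiag_cases {N : ℕ} {Δt : ℝ} (hΔt : 0 < Δt) (v : Fin N → ℝ)
    {i j : Fin N} (hij : i ≠ j) :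
    |stepMat N Δt v i j| ≤
      (if (i : ℕ) + 1 = (j : ℕ) then Δt * (1 / (hmesh N) ^ 2 + (gridx N i)⁻¹ * (1 / (2 * hmesh N))) else 0)
      + (if (j : ℕ) + 1 = (i : ℕ) then Δt * (1 / (hmesh N) ^ 2 - (gridx N i)⁻¹ * (1 / (2 * hmesh N))) else 0) := by
  have hh := hmesh_pos N
  have hx := gridx_pos i
  have hne : (i : ℕ) ≠ (j : ℕ) := fun h => hij (Fin.ext h)
  have hcle : (gridx N i)⁻¹ * (1 / (2 * hmesh N)) ≤ 1 / (hmesh N) ^ 2 := by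
    have h1 : hmesh N ≤ gridx N i := by
      unfold gridx
      nlinarith [hmesh_pos N, (Nat.cast_nonneg (i : ℕ) : (0:ℝ) ≤ (i : ℕ))]
    have h2 : (gridx N i)⁻¹ ≤ (hmesh N)⁻¹ := inv_anti₀ hh h1
    have h3 : (gridx N i)⁻¹ * (1 / (2 * hmesh N)) ≤ (hmesh N)⁻¹ * (1 / (2 * hmesh N)) := by
      apply mul_le_mul_of_nonneg_right h2
      positivity
    refine h3.trans ?_
    rw [one_div, one_div, mul_inv, ← mul_assoc, pow_two, mul_inv]
    nlinarith [inv_pos.mpr hh, mul_pos (inv_pos.mpr hh) (inv_pos.mpr hh)]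
  have hcpos : 0 < (gridx N i)⁻¹ * (1 / (2 * hmesh N)) := by positivity
  rw [stepMat_offdiag Δt v hij]
  by_cases h1 : (i : ℕ) + 1 = (j : ℕ)
  · have h2 : ¬ ((j : ℕ) + 1 = (i : ℕ)) := by omega
    have hA : matA N i j = (1 / (hmesh N) ^ 2) * (-1) := by
      unfold matA; rw [if_neg hne, if_pos (Or.inl h1)]
    have hB : matB N i j = (1 / (2 * hmesh N)) * 1 := by
      unfold matB; rw [if_pos h1]
    rw [hA, hB, if_pos h1, if_neg h2, add_zero, abs_of_nonpos (by nlinarith), ]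
    nlinarith
  · by_cases h2 : (j : ℕ) + 1 = (i : ℕ)
    · have hA : matA N i j = (1 / (hmesh N) ^ 2) * (-1) := by
        unfold matA; rw [if_neg hne, if_pos (Or.inr h2)]
      have hB : matB N i j = (1 / (2 * hmesh N)) * (-1) := by
        unfold matB; rw [if_neg h1, if_pos h2]
      rw [hA, hB, if_neg h1, if_pos h2, zero_add, abs_of_nonpos (by nlinarith)]
      nlinarith
    · have hA : matA N i j = (1 / (hmesh N) ^ 2) * 0 := by
        unfold matA; rw [if_neg hne, if_neg (by tauto)]
      have hB : matB N i j = (1 / (2 * hmesh N)) * 0 := by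
        unfold matB; rw [if_neg h1, if_neg h2]
      rw [hA, hB, if_neg h1, if_neg h2]
      simp

/-- sum of an if-eq function over univ is bounded by the constant. -/
lemma sum_if_le {N : ℕ} (k : ℕ) (c : ℝ) (hc : 0 ≤ c) :
    ∑ j : Fin N, (if k = (j : ℕ) then c else 0) ≤ c := by
  rw [← Finset.sum_filter]
  rw [Finset.sum_const]
  have hcard : (Finset.univ.filter (fun j : Fin N => k = (j : ℕ))).card ≤ 1 := by
    rw [Finset.card_le_one]
    intro a ha b hb
    simp only [Finset.mem_filter] at ha hb
    exact Fin.ext (by omega)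
  calc (Finset.univ.filter (fun j : Fin N => k = (j : ℕ))).card • c
      ≤ 1 • c := by
        apply nsmul_le_nsmul_left hc hcard
    _ = c := one_smul _ _

lemma sum_if_le' {N : ℕ} (k : ℕ) (c : ℝ) (hc : 0 ≤ c) :
    ∑ j : Fin N, (if (j : ℕ) + 1 = k then c else 0) ≤ c := by
  have : ∀ j : Fin N, (if (j : ℕ) + 1 = k then c else 0) = (if k - 1 = (j : ℕ) ∧ 1 ≤ k then c else 0) := by
    intro j
    congr 1
    simp only [eq_iff_iff]
    omega
  rw [Finset.sum_congr rfl (fun j _ => this j)]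
  by_cases hk : 1 ≤ k
  · simp only [hk, and_true]
    exact sum_if_le (k-1) c hc
  · simp only [hk, and_false, if_false, Finset.sum_const_zero]
    exact hc

/-- The SDD-with-margin-1 condition for the step matrix. -/
lemma stepMat_sdd {N : ℕ} {Δt : ℝ} (hΔt : 0 < Δt) (v : Fin N → ℝ)
    (hv : ∀ i, |v i| ≤ π / 2) (i : Fin N) :
    (∑ j ∈ Finset.univ.erase i, |stepMat N Δt v i j|) + 1 ≤ stepMat N Δt v i i := by
  have hh := hmesh_pos N
  have hx := gridx_pos i
  set a : ℝ := 1 / (hmesh N) ^ 2 with ha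
  set c : ℝ := (gridx N i)⁻¹ * (1 / (2 * hmesh N)) with hc
  have hcpos : 0 < c := by rw [hc]; positivity
  have hapos : 0 < a := by rw [ha]; positivity
  have hcle : c ≤ a := by
    have h1 : hmesh N ≤ gridx N i := by
      unfold gridx
      nlinarith [hmesh_pos N, (Nat.cast_nonneg (i : ℕ) : (0:ℝ) ≤ (i : ℕ))]
    have h2 : (gridx N i)⁻¹ ≤ (hmesh N)⁻¹ := inv_anti₀ hh h1
    have h3 : c ≤ (hmesh N)⁻¹ * (1 / (2 * hmesh N)) := by
      rw [hc]
      apply mul_le_mul_of_nonneg_right h2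
      positivity
    refine h3.trans ?_
    rw [ha]
    rw [one_div, one_div, mul_inv, ← mul_assoc, pow_two, mul_inv]
    nlinarith [inv_pos.mpr hh, mul_pos (inv_pos.mpr hh) (inv_pos.mpr hh)]
  -- bound the off-diagonal sum
  have hsum : (∑ j ∈ Finset.univ.erase i, |stepMat N Δt v i j|) ≤ Δt * (2 * a) := by
    have hb : ∀ j ∈ Finset.univ.erase i, |stepMat N Δt v i j| ≤
        (if (i : ℕ) + 1 = (j : ℕ) then Δt * (a + c) else 0)
        + (if (j : ℕ) + 1 = (i : ℕ) then Δt * (a - c) else 0) := by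
      intro j hj
      have hij : i ≠ j := fun h => (Finset.mem_erase.mp hj).1 h.symm
      exact stepMat_offdiag_cases hΔt v hij
    refine (Finset.sum_le_sum hb).trans ?_
    rw [Finset.sum_add_distrib]
    have hs1 : ∑ j ∈ Finset.univ.erase i, (if (i : ℕ) + 1 = (j : ℕ) then Δt * (a + c) else 0) ≤ Δt * (a + c) := by
      refine le_trans (Finset.sum_le_sum_of_subset_of_nonneg (Finset.erase_subset _ _) ?_) ?_
      · intro j _ _; positivity
      · exact sum_if_le ((i : ℕ) + 1) _ (by positivity)
    have hs2 : ∑ j ∈ Finset.univ.erase i, (if (j : ℕ) + 1 = (i : ℕ) then Δt * (a - c) else 0) ≤ Δt * (a - c) := by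
      refine le_trans (Finset.sum_le_sum_of_subset_of_nonneg (Finset.erase_subset _ _) ?_) ?_
      · intro j _ _
        have : (0:ℝ) ≤ Δt * (a - c) := by nlinarith
        split <;> simp [this]
      · exact sum_if_le' ((i : ℕ)) _ (by nlinarith)
    linarith
  -- diagonal bound
  have hdiag : 1 + Δt * (2 * a) ≤ stepMat N Δt v i i := by
    rw [stepMat_diag]
    have hg : 0 ≤ gfun (v i) := by
      unfold gfun
      exact gfun_nonneg'_s2 (hv i)
    have hp : (0:ℝ) ≤ gridx N i ^ (-2 : ℝ) := Real.rpow_nonneg hx.le _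
    have : 2 / (hmesh N)^2 = 2 * a := by rw [ha]; ring
    rw [this]
    nlinarith [mul_nonneg hg hp, mul_nonneg hΔt.le (mul_nonneg hg hp)]
  linarith

end AuxLemmas

/-- If `‖u⁰‖_∞ ≤ π/2` and `Δt > 0`, the semi-implicit Euler scheme
`u^{n+1} = (I + Δt(C + G(uⁿ)D⁻²))⁻¹ uⁿ` is well-defined: the matrix
`I + Δt(C + G(uⁿ)D⁻²)` is invertible at every step (so `u^{n+1}` is uniquely determined
by the implicit equation), and `‖uⁿ‖_∞ ≤ ‖u⁰‖_∞` for all `n ≥ 0`. -/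
theorem stmt2 {N : ℕ} (hN : 1 ≤ N) (u0 : Fin N → ℝ) (hu0 : ‖u0‖ ≤ π / 2)
    (Δt : ℝ) (hΔt : 0 < Δt)
    (u : ℕ → Fin N → ℝ) (h0 : u 0 = u0)
    (hrec : ∀ n, u (n + 1) = (stepMat N Δt (u n))⁻¹.mulVec (u n)) :
    ∀ n, IsUnit (stepMat N Δt (u n)) ∧ ‖u n‖ ≤ ‖u0‖ := by
  intro n
  induction n with
  | zero =>
    refine ⟨?_, by rw [h0]⟩
    apply sdd_isUnit' hN
    apply stepMat_sdd hΔt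
    intro i
    rw [h0]
    have h1 := norm_le_pi_norm u0 i
    rw [Real.norm_eq_abs] at h1
    linarith
  | succ n ih =>
    obtain ⟨hunit, hle⟩ := ih
    have hvn : ∀ i, |u n i| ≤ π / 2 := by
      intro i
      have h1 := norm_le_pi_norm (u n) i
      rw [Real.norm_eq_abs] at h1
      linarith
    have hsdd := stepMat_sdd hΔt (u n) hvn
    have hMv : (stepMat N Δt (u n)).mulVec (u (n + 1)) = u n := by
      rw [hrec n, Matrix.mulVec_mulVec,
        Matrix.mul_nonsing_inv _ ((Matrix.isUnit_iff_isUnit_det _).mp hunit),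
        Matrix.one_mulVec]
    have hbound : ‖u (n + 1)‖ ≤ ‖u n‖ := by
      have h2 := sdd_norm_le' hN _ hsdd (u (n + 1))
      rwa [hMv] at h2
    refine ⟨?_, hbound.trans hle⟩
    apply sdd_isUnit' hN
    apply stepMat_sdd hΔt
    intro i
    have h1 := norm_le_pi_norm (u (n + 1)) i
    rw [Real.norm_eq_abs] at h1
    linarith
end
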